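/- On the reference triangle T̂ = conv{(0,0),(1,0),(0,1)}, the interpolant of v̂=(0,x1³) defined by the original BDM degrees of freedom (edge moments against P₂, ∫_T Iv·∇z = ∫_T v·∇z for z ∈ P₁, and ∫_T Iv·z = ∫_T v·z for z ∈ Q₂) equals w = ((3/140)x1(1−x1−2x2), 1/20 − (3/5)x1 + (3/2)x1² − (3/140)x2(1−2x1−x2)). In particular its first component is not identically zero. -/

import Mathlib

open MeasureTheory intervalIntegral

/-- The reference triangle `T̂ = conv{(0,0),(1,0),(0,1)}`. -/
def refTri : Set (ℝ × ℝ) := {p | 0 ≤ p.1 ∧ 0 ≤ p.2 ∧ p.1 + p.2 ≤ 1}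

/-- `v̂ = (0, x₁³)`. -/
def vhat : ℝ × ℝ → ℝ × ℝ := fun p => (0, p.1 ^ 3)

/-- The interpolant of `v̂` given by the original Brezzi–Douglas–Marini degrees of freedom:
`w = ((3/140)x₁(1-x₁-2x₂), 1/20 - (3/5)x₁ + (3/2)x₁² - (3/140)x₂(1-2x₁-x₂))`. -/
noncomputable def wOrig : ℝ × ℝ → ℝ × ℝ := fun p =>
  (3 / 140 * p.1 * (1 - p.1 - 2 * p.2),
    1 / 20 - 3 / 5 * p.1 + 3 / 2 * p.1 ^ 2 - 3 / 140 * p.2 * (1 - 2 * p.1 - p.2))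

/-- The divergence-free bubble field spanning `Q₂(T̂)`:
`z₀ = curl(x₁x₂(1-x₁-x₂)) = (x₁ - x₁² - 2x₁x₂, -(x₂ - 2x₁x₂ - x₂²))`, which lies in
`(P₂)²`, has zero divergence and zero normal trace on `∂T̂`. -/
def zQ : ℝ × ℝ → ℝ × ℝ := fun p =>
  (p.1 - p.1 ^ 2 - 2 * p.1 * p.2, -(p.2 - 2 * p.1 * p.2 - p.2 ^ 2))

/-- Edge flux moment (see previous statements): the rotated direction vector serves as
area-weighted outward normal for the counterclockwise-oriented triangle. -/
noncomputable def edgeMoment (F : ℝ × ℝ → ℝ × ℝ) (a b : ℝ × ℝ) (z : ℝ → ℝ) : ℝ :=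
  ∫ t in (0:ℝ)..1,
    ((F (a + t • (b - a))).1 * (b - a).2 - (F (a + t • (b - a))).2 * (b - a).1) * z t

/-! `w = (0, q(x₁)) + (3/140) z₀`, where `q(t) = 3/2 t² - 3/5 t + 1/20` is the `L²(0,1)`-projection
of `t³` onto `P₂` (`t³ - q(t)` is `1/20` times the shifted Legendre polynomial of degree 3).
The bubble `z₀` is divergence-free with no normal flux through `∂T̂`, so it contributes neither to
the edge moments nor to the moments against constant fields. What remains compares `q` with `t³`
against `P₂`: on the bottom edge directly, on the hypotenuse after `t ↦ 1 - t`, and inside `T̂`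
against `1 - x₁` after integrating out `x₂`; on the left edge both normal components vanish.
The factor `3/140` is the one that matches the `z₀`-moment. -/

theorem isCompact_refTri : IsCompact refTri := by
  refine (isCompact_Icc : IsCompact (Set.Icc ((0 : ℝ), (0 : ℝ)) (1, 1))).of_isClosed_subset ?_ ?_
  · exact (isClosed_le continuous_const continuous_fst).inter
      ((isClosed_le continuous_const continuous_snd).inter
        (isClosed_le (continuous_fst.add continuous_snd) continuous_const))
  · rintro ⟨x, y⟩ ⟨hx, hy, hxy⟩
    exact ⟨⟨hx, hy⟩, by dsimp only at *; linarith, by dsimp only at *; linarith⟩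

theorem mk_mem_refTri_iff (x y : ℝ) :
    (x, y) ∈ refTri ↔ x ∈ Set.Icc 0 1 ∧ y ∈ Set.Icc 0 (1 - x) :=
  ⟨fun ⟨hx, hy, hxy⟩ => ⟨⟨hx, by linarith⟩, hy, by linarith⟩,
    fun ⟨⟨hx, _⟩, hy, hyx⟩ => ⟨hx, hy, by linarith⟩⟩

theorem intervalIntegral_eq_integral_indicator_Icc {E : Type*} [NormedAddCommGroup E]
    [NormedSpace ℝ E] (g : ℝ → E) {a b : ℝ} (hab : a ≤ b) :
    ∫ x in a..b, g x = ∫ x, (Set.Icc a b).indicator g x := by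
  rw [MeasureTheory.integral_indicator measurableSet_Icc, integral_Icc_eq_integral_Ioc,
    integral_of_le hab]

theorem integral_refTri_eq_iterated {E : Type*} [NormedAddCommGroup E] [NormedSpace ℝ E]
    (f : ℝ × ℝ → E) (hf : IntegrableOn f refTri) :
    ∫ p in refTri, f p = ∫ x in (0 : ℝ)..1, ∫ y in (0 : ℝ)..(1 - x), f (x, y) := by
  have hmeas : MeasurableSet refTri := isCompact_refTri.isClosed.measurableSet
  have slice (x : ℝ) : ∫ y, refTri.indicator f (x, y) =
      (Set.Icc 0 1).indicator (fun x => ∫ y in (0 : ℝ)..(1 - x), f (x, y)) x := by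
    by_cases hx : x ∈ Set.Icc (0 : ℝ) 1
    · rw [Set.indicator_of_mem hx,
        intervalIntegral_eq_integral_indicator_Icc _ (by linarith [hx.2])]
      congr with y
      by_cases hy : y ∈ Set.Icc 0 (1 - x)
      · rw [Set.indicator_of_mem hy, Set.indicator_of_mem ((mk_mem_refTri_iff x y).2 ⟨hx, hy⟩)]
      · rw [Set.indicator_of_notMem hy,
          Set.indicator_of_notMem fun h => hy ((mk_mem_refTri_iff x y).1 h).2]
    · have hzero (y : ℝ) : refTri.indicator f (x, y) = 0 :=
        Set.indicator_of_notMem (fun h => hx ((mk_mem_refTri_iff x y).1 h).1) f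
      simp only [hzero, MeasureTheory.integral_zero, Set.indicator_of_notMem hx]
  rw [← MeasureTheory.integral_indicator hmeas, Measure.volume_eq_prod,
    integral_prod _ ((integrable_indicator_iff hmeas).2 hf)]
  simp only [slice, intervalIntegral_eq_integral_indicator_Icc _ zero_le_one]

/- `intervalIntegral.integral_const_mul` and `intervalIntegral.integral_sub` do not fire on the
eta-reduced integrands `(c * ·)` and `(c - ·)` that `ring_nf` produces. -/

theorem integral_const_mul_id (c a b : ℝ) : ∫ x in a..b, c * x = c * ((b ^ 2 - a ^ 2) / 2) := by
  rw [← integral_id]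
  exact intervalIntegral.integral_const_mul c fun x => x

theorem integral_const_sub_id (c a b : ℝ) :
    ∫ x in a..b, c - x = (b - a) * c - (b ^ 2 - a ^ 2) / 2 := by
  rw [← integral_id, ← smul_eq_mul, ← intervalIntegral.integral_const]
  exact intervalIntegral.integral_sub intervalIntegrable_const intervalIntegrable_id

theorem wOrig_edgeMoments_eq_vhat (c0 c1 c2 : ℝ) :
    edgeMoment wOrig (0, 0) (1, 0) (fun t => c0 + c1 * t + c2 * t ^ 2) =
        edgeMoment vhat (0, 0) (1, 0) (fun t => c0 + c1 * t + c2 * t ^ 2) ∧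
      edgeMoment wOrig (1, 0) (0, 1) (fun t => c0 + c1 * t + c2 * t ^ 2) =
        edgeMoment vhat (1, 0) (0, 1) (fun t => c0 + c1 * t + c2 * t ^ 2) ∧
      edgeMoment wOrig (0, 1) (0, 0) (fun t => c0 + c1 * t + c2 * t ^ 2) =
        edgeMoment vhat (0, 1) (0, 0) (fun t => c0 + c1 * t + c2 * t ^ 2) := by
  refine ⟨?_, ?_, by simp [edgeMoment, wOrig, vhat]⟩
  all_goals
    simp only [edgeMoment, wOrig, vhat]
    norm_num
    ring_nf
    simp (disch := exact (by fun_prop : Continuous _).intervalIntegrable _ _) only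
      [intervalIntegral.integral_add, intervalIntegral.integral_sub,
        intervalIntegral.integral_const_mul, intervalIntegral.integral_mul_const, integral_pow,
        integral_id, integral_const_mul_id]
    norm_num
    ring

theorem wOrig_interiorMoments_eq_vhat (a b γ : ℝ) :
    (∫ p in refTri, ((wOrig p).1 * a + (wOrig p).2 * b)) =
        ∫ p in refTri, ((vhat p).1 * a + (vhat p).2 * b) ∧
      (∫ p in refTri, ((wOrig p).1 * (γ * (zQ p).1) + (wOrig p).2 * (γ * (zQ p).2))) =
        ∫ p in refTri, ((vhat p).1 * (γ * (zQ p).1) + (vhat p).2 * (γ * (zQ p).2)) := by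
  constructor
  all_goals
    simp (disch := apply ContinuousOn.integrableOn_compact isCompact_refTri; fun_prop) only
      [integral_refTri_eq_iterated, wOrig, vhat, zQ]
    ring_nf
    simp (disch := exact (by fun_prop : Continuous _).intervalIntegrable _ _) only
      [intervalIntegral.integral_add, intervalIntegral.integral_neg,
        intervalIntegral.integral_const_mul, intervalIntegral.integral_mul_const, integral_pow,
        integral_id, intervalIntegral.integral_const, integral_const_mul_id]
    ring_nf
    simp (disch := exact (by fun_prop : Continuous _).intervalIntegrable _ _) only
      [intervalIntegral.integral_add, intervalIntegral.integral_sub,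
        intervalIntegral.integral_const_mul, intervalIntegral.integral_mul_const, integral_pow,
        integral_id, intervalIntegral.integral_const, integral_const_mul_id, integral_const_sub_id]
    norm_num
    ring

/-- On `T̂`, the field `wOrig` has all *original* BDM₂ degrees of freedom of `v̂ = (0,x₁³)`:
edge normal moments against `P₂(e)`, interior moments against gradients `∇z`, `z ∈ P₁`
(i.e. against all constant vector fields), and interior moments against
`Q₂ = {z ∈ (P₂)² : div z = 0, z·n|∂T̂ = 0} = span{zQ}`; hence `wOrig` is the interpolant of
`v̂` for the original BDM degrees of freedom.  In particular its first component is *not*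
identically zero. -/
theorem wOrig_is_original_BDM2_interpolant :
    (∀ c0 c1 c2 : ℝ,
      edgeMoment wOrig (0, 0) (1, 0) (fun t => c0 + c1 * t + c2 * t ^ 2) =
        edgeMoment vhat (0, 0) (1, 0) (fun t => c0 + c1 * t + c2 * t ^ 2)) ∧
    (∀ c0 c1 c2 : ℝ,
      edgeMoment wOrig (1, 0) (0, 1) (fun t => c0 + c1 * t + c2 * t ^ 2) =
        edgeMoment vhat (1, 0) (0, 1) (fun t => c0 + c1 * t + c2 * t ^ 2)) ∧
    (∀ c0 c1 c2 : ℝ,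
      edgeMoment wOrig (0, 1) (0, 0) (fun t => c0 + c1 * t + c2 * t ^ 2) =
        edgeMoment vhat (0, 1) (0, 0) (fun t => c0 + c1 * t + c2 * t ^ 2)) ∧
    (∀ a b : ℝ,
      (∫ p in refTri, ((wOrig p).1 * a + (wOrig p).2 * b)) =
        ∫ p in refTri, ((vhat p).1 * a + (vhat p).2 * b)) ∧
    (∀ γ : ℝ,
      (∫ p in refTri, ((wOrig p).1 * (γ * (zQ p).1) + (wOrig p).2 * (γ * (zQ p).2))) =
        ∫ p in refTri, ((vhat p).1 * (γ * (zQ p).1) + (vhat p).2 * (γ * (zQ p).2))) ∧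
    (∃ p : ℝ × ℝ, (wOrig p).1 ≠ 0) :=
  ⟨fun c0 c1 c2 => (wOrig_edgeMoments_eq_vhat c0 c1 c2).1,
    fun c0 c1 c2 => (wOrig_edgeMoments_eq_vhat c0 c1 c2).2.1,
    fun c0 c1 c2 => (wOrig_edgeMoments_eq_vhat c0 c1 c2).2.2,
    fun a b => (wOrig_interiorMoments_eq_vhat a b 0).1,
    fun γ => (wOrig_interiorMoments_eq_vhat 0 0 γ).2,
    (1 / 2, 0), by norm_num [wOrig]⟩
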